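/- The budgeted-DFS strategy visits the not-yet-visited vertices of the tree in exactly the same order as the unconstrained DFS traversal: if the unconstrained DFS visits new vertices in order v_1, v_2, ..., v_l, then the concatenation of the budgeted walks (ignoring the detours to the root and back along already-traversed tree paths) visits new vertices in the same order v_1, ..., v_l. -/

import Mathlib

section Aux
variable {V : Type*} [DecidableEq V]

lemma loop_append_mem (x : List V) : ∀ (y bs : List V), (∀ a ∈ x, a ∈ bs) →
    List.eraseDupsBy.loop (· == ·) (x ++ y) bs = List.eraseDupsBy.loop (· == ·) y bs := by
  induction x with
  | nil => intros; rfl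
  | cons a x ih =>
    intro y bs h
    have ha : (bs.any fun b => a == b) = true := by
      simpa using h a (by simp)
    simp only [List.cons_append, List.eraseDupsBy.loop, ha]
    exact ih y bs fun b hb => h b (by simp [hb])

lemma loop_append_nodup (x : List V) : ∀ (y bs : List V), x.Nodup →
    (∀ a ∈ x, a ∉ bs) →
    List.eraseDupsBy.loop (· == ·) (x ++ y) bs = List.eraseDupsBy.loop (· == ·) y (x.reverse ++ bs) := by
  induction x with
  | nil => intros; rfl
  | cons a x ih =>
    intro y bs hnd h
    have ha : (bs.any fun b => a == b) = false := by
      have h' := h a (by simp)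
      simp only [List.any_eq_false, beq_iff_eq]
      rintro b hb rfl
      exact h' hb
    simp only [List.cons_append, List.eraseDupsBy.loop, ha]
    show List.eraseDupsBy.loop (· == ·) (x ++ y) (a :: bs) = _
    rw [ih y (a :: bs) hnd.of_cons]
    · simp
    · intro b hb
      simp only [List.mem_cons, not_or]
      exact ⟨fun hba => (List.nodup_cons.1 hnd).1 (hba ▸ hb), h b (by simp [hb])⟩

lemma aux_main (ps : List (List V × List V)) : ∀ (prev : List V),
    (prev ++ (ps.map Prod.snd).flatten).Nodup →
    (∀ (i : ℕ) (h : i < ps.length), ∀ v ∈ ps[i].1,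
      v ∈ prev ++ ((ps.map Prod.snd).take i).flatten) →
    List.eraseDupsBy.loop (· == ·) ((ps.map fun p => p.1 ++ p.2).flatten) prev.reverse
      = prev ++ (ps.map Prod.snd).flatten := by
  induction ps with
  | nil =>
    intro prev h _
    simp [List.eraseDupsBy.loop]
  | cons p ps ih =>
    intro prev hnd hdet
    obtain ⟨d, g⟩ := p
    simp only [List.map_cons, List.flatten_cons] at hnd ⊢
    rw [List.append_assoc]
    rw [loop_append_mem d _ _ (by
      intro a ha
      have := hdet 0 (Nat.succ_pos _) a ha
      simpa using this)]
    have hg_nd : g.Nodup := by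
      have := hnd.of_append_right
      exact this.of_append_left
    rw [loop_append_nodup g _ _ hg_nd (by
      intro a ha hap
      have hap' : a ∈ prev := by simpa using hap
      exact (List.disjoint_of_nodup_append hnd) hap' (by simp [ha]))]
    have : g.reverse ++ prev.reverse = (prev ++ g).reverse := by simp
    rw [this, ih (prev ++ g) (by simpa using hnd)]
    · simp
    · intro i h v hv
      have := hdet (i+1) (Nat.succ_lt_succ h) v (by simpa using hv)
      simpa [List.take_succ_cons, List.append_assoc] using this

end Aux

/-- The budgeted DFS visits the not-yet-visited vertices in the same order as
the unconstrained DFS: if the unconstrained DFS first-visit order is the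
duplicate-free list `L`, and the concatenated budgeted visit sequence `s` is
obtained by interleaving consecutive segments of `L` with detours (to the root
and back) consisting only of vertices already visited earlier, then the
sequence of first visits of `s` equals `L`. -/
theorem budgeted_dfs_same_order {V : Type*} [DecidableEq V]
    (L s : List V) (hL : L.Nodup) (m : ℕ)
    (seg det : Fin m → List V)
    (hseg : L = (List.ofFn seg).flatten)
    (hs : s = (List.ofFn (fun i => det i ++ seg i)).flatten)
    (hdet : ∀ i : Fin m, ∀ v ∈ det i, v ∈ ((List.ofFn seg).take i).flatten) :
    s.eraseDups = L := by
  set ps : List (List V × List V) := List.ofFn (fun i => (det i, seg i)) with hps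
  have hmap2 : ps.map Prod.snd = List.ofFn seg := by
    rw [hps, List.map_ofFn]; rfl
  have hmap1 : ps.map (fun p => p.1 ++ p.2) = List.ofFn (fun i => det i ++ seg i) := by
    rw [hps, List.map_ofFn]; rfl
  have hlen : ps.length = m := by simp [hps]
  have := aux_main ps [] (by
      rw [hmap2]; simpa using hseg ▸ hL)
    (by
      intro i h v hv
      have h' : i < m := hlen ▸ h
      have hi : ps[i].1 = det ⟨i, h'⟩ := by
        simp [hps]
      rw [hi] at hv
      have := hdet ⟨i, h'⟩ v hv
      rw [hmap2]
      simpa using this)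
  rw [hmap1] at this
  simp only [List.nil_append, List.reverse_nil] at this
  rw [hs, hseg, ← hmap2, List.eraseDups, List.eraseDupsBy]
  exact this
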